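/- Let α ∈ ℂ with Re α > 0 and Im α > 0, and let 0 < r₁ ≤ r₂. Then φ(α,r₂) − φ(α,r₁) = ∫_{r₁}^{r₂} √(1 + α² sinh² t)/sinh t · dt, where the integral is of the complex-valued function of the real variable t. -/

import Mathlib

/-- `w α r = √(1 + α² sinh² r)` (principal branch). -/
noncomputable def w (α : ℂ) (r : ℝ) : ℂ :=
  (1 + α ^ 2 * (Real.sinh r : ℂ) ^ 2) ^ (1 / 2 : ℂ)

/-- `φ(α,r) = α log((α cosh r + w)/√(α²−1)) + (1/2) log((cosh r − w)/(cosh r + w))`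
(principal branches). -/
noncomputable def phi (α : ℂ) (r : ℝ) : ℂ :=
  α * Complex.log ((α * (Real.cosh r : ℂ) + w α r) / ((α ^ 2 - 1) ^ (1 / 2 : ℂ))) +
    (1 / 2 : ℂ) * Complex.log (((Real.cosh r : ℂ) - w α r) / ((Real.cosh r : ℂ) + w α r))

/-! φ is an antiderivative of `w / sinh` on each side of `0`. Writing `S = sinh t`, `C = cosh t`,
`W = w α t`, one has `W' = α² S C / W`, the first logarithm has derivative `α S / W` and the
second `2 / (S W)` (using `W² = 1 + α² S²`, `C² = 1 + S²`), so
`φ' = (α² S² + 1) / (S W) = W / S`. The hypotheses `Re α, Im α > 0` put `W` and `√(α² − 1)` in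
the open first quadrant, which keeps every logarithm on the slit plane. -/

open Complex

lemma re_cpow_one_half_pos {z : ℂ} (hz : z.im ≠ 0) : 0 < (z ^ (1 / 2 : ℂ)).re := by
  rw [one_div, cpow_inv_two_re, Real.sqrt_pos]
  linarith [abs_re_lt_norm.2 hz, neg_abs_le z.re]

lemma im_cpow_one_half_pos {z : ℂ} (hz : 0 < z.im) : 0 < (z ^ (1 / 2 : ℂ)).im := by
  rw [one_div, cpow_inv_two_im_eq_sqrt hz.le, Real.sqrt_pos]
  linarith [abs_re_lt_norm.2 hz.ne', le_abs_self z.re]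

lemma re_div_pos {a b : ℂ} (ha : 0 < a.re) (ha' : 0 ≤ a.im) (hb : 0 < b.re) (hb' : 0 ≤ b.im) :
    0 < (a / b).re := by
  have : 0 < normSq b := normSq_pos.2 (by rintro rfl; simp at hb)
  rw [div_re]
  positivity

lemma im_ofReal_sub_div_ofReal_add_neg {c : ℝ} (hc : 0 < c) {z : ℂ} (hz : 0 < z.im) :
    ((c - z) / (c + z)).im < 0 := by
  have : 0 < normSq (c + z) := normSq_pos.2 fun h => by
    simpa [hz.ne'] using congrArg im h
  rw [div_im, ← sub_div]
  refine div_neg_of_neg_of_pos ?_ this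
  simp only [sub_im, add_im, sub_re, add_re, ofReal_re, ofReal_im]
  nlinarith

lemma im_one_add_sq_mul_ofReal_sq (α : ℂ) (s : ℝ) :
    (1 + α ^ 2 * (s : ℂ) ^ 2).im = 2 * α.re * α.im * s ^ 2 := by
  simp only [sq, add_im, one_im, mul_im, mul_re, ofReal_re, ofReal_im]
  ring

lemma w_sq (α : ℂ) (t : ℝ) : w α t ^ 2 = 1 + α ^ 2 * (Real.sinh t : ℂ) ^ 2 := by
  simp [w]

section

variable {α : ℂ} {t : ℝ}

lemma im_sq_sub_one_pos (hre : 0 < α.re) (him : 0 < α.im) : 0 < (α ^ 2 - 1).im := by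
  simp only [sub_im, one_im, sub_zero, sq, mul_im]
  positivity

lemma im_one_add_sq_mul_sinh_sq_pos (hre : 0 < α.re) (him : 0 < α.im) (ht : t ≠ 0) :
    0 < (1 + α ^ 2 * (Real.sinh t : ℂ) ^ 2).im := by
  rw [im_one_add_sq_mul_ofReal_sq]
  have : Real.sinh t ≠ 0 := Real.sinh_ne_zero.2 ht
  positivity

lemma one_add_sq_mul_sinh_sq_mem_slitPlane (hre : 0 < α.re) (him : 0 < α.im) (ht : t ≠ 0) :
    1 + α ^ 2 * (Real.sinh t : ℂ) ^ 2 ∈ slitPlane :=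
  Or.inr (im_one_add_sq_mul_sinh_sq_pos hre him ht).ne'

lemma re_w_pos (hre : 0 < α.re) (him : 0 < α.im) (ht : t ≠ 0) : 0 < (w α t).re :=
  re_cpow_one_half_pos (im_one_add_sq_mul_sinh_sq_pos hre him ht).ne'

lemma im_w_pos (hre : 0 < α.re) (him : 0 < α.im) (ht : t ≠ 0) : 0 < (w α t).im :=
  im_cpow_one_half_pos (im_one_add_sq_mul_sinh_sq_pos hre him ht)

lemma hasDerivAt_w (h : 1 + α ^ 2 * (Real.sinh t : ℂ) ^ 2 ∈ slitPlane) :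
    HasDerivAt (w α) (α ^ 2 * Real.sinh t * Real.cosh t / w α t) t := by
  have hbase : HasDerivAt (fun r : ℝ => 1 + α ^ 2 * (Real.sinh r : ℂ) ^ 2)
      (α ^ 2 * (2 * Real.sinh t * Real.cosh t)) t := by
    simpa using (((Real.hasDerivAt_sinh t).ofReal_comp.pow 2).const_mul (α ^ 2)).const_add 1
  refine ((hasStrictDerivAt_cpow_const h).hasDerivAt.comp t hbase).congr_deriv ?_
  rw [show (1 / 2 : ℂ) - 1 = -(1 / 2) by norm_num, cpow_neg]
  simp only [w]
  ring

lemma hasDerivAt_log_mul_cosh_add_w_div (hre : 0 < α.re) (him : 0 < α.im) (ht : t ≠ 0) :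
    HasDerivAt (fun r : ℝ => log ((α * Real.cosh r + w α r) / (α ^ 2 - 1) ^ (1 / 2 : ℂ)))
      (α * Real.sinh t / w α t) t := by
  have hW := re_w_pos hre him ht
  have hW0 := ne_zero_of_re_pos hW
  have hD := re_cpow_one_half_pos (im_sq_sub_one_pos hre him).ne'
  have hD0 := ne_zero_of_re_pos hD
  have hN : 0 < (α * Real.cosh t + w α t).re := by
    simp only [add_re, mul_re, ofReal_re, ofReal_im, mul_zero, sub_zero]
    have := Real.cosh_pos t
    positivity
  have hN0 := ne_zero_of_re_pos hN
  have hslit : (α * Real.cosh t + w α t) / (α ^ 2 - 1) ^ (1 / 2 : ℂ) ∈ slitPlane := by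
    refine Or.inl (re_div_pos hN ?_ hD (im_cpow_one_half_pos (im_sq_sub_one_pos hre him)).le)
    simp only [add_im, mul_im, ofReal_re, ofReal_im, mul_zero]
    have := Real.cosh_pos t
    have := im_w_pos hre him ht
    positivity
  have hWd := hasDerivAt_w (one_add_sq_mul_sinh_sq_mem_slitPlane hre him ht)
  refine ((((Real.hasDerivAt_cosh t).ofReal_comp.const_mul α).add hWd).div_const _
    |>.clog_real hslit).congr_deriv ?_
  simp only [Pi.add_apply]
  field_simp
  ring

lemma hasDerivAt_log_cosh_sub_w_div_cosh_add_w (hre : 0 < α.re) (him : 0 < α.im) (ht : t ≠ 0) :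
    HasDerivAt (fun r : ℝ => log ((Real.cosh r - w α r) / (Real.cosh r + w α r)))
      (2 / (Real.sinh t * w α t)) t := by
  have hWim := im_w_pos hre him ht
  have hW0 := ne_zero_of_re_pos (re_w_pos hre him ht)
  have hS0 : (Real.sinh t : ℂ) ≠ 0 := ofReal_ne_zero.2 (Real.sinh_ne_zero.2 ht)
  have hplus : (Real.cosh t : ℂ) + w α t ≠ 0 := fun h => by
    simpa [hWim.ne'] using congrArg im h
  have hminus : (Real.cosh t : ℂ) - w α t ≠ 0 := fun h => by
    simpa [hWim.ne'] using congrArg im h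
  have hslit : ((Real.cosh t : ℂ) - w α t) / (Real.cosh t + w α t) ∈ slitPlane :=
    Or.inr (im_ofReal_sub_div_ofReal_add_neg (Real.cosh_pos t) hWim).ne
  have hC : (Real.cosh t : ℂ) ^ 2 = 1 + (Real.sinh t : ℂ) ^ 2 := by
    exact_mod_cast Real.cosh_sq t |>.trans (by ring)
  have hWd := hasDerivAt_w (one_add_sq_mul_sinh_sq_mem_slitPlane hre him ht)
  have hCd := (Real.hasDerivAt_cosh t).ofReal_comp
  refine (((hCd.sub hWd).div (hCd.add hWd) hplus).clog_real hslit).congr_deriv ?_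
  simp only [Pi.div_apply, Pi.add_apply, Pi.sub_apply]
  field_simp
  linear_combination 2 * ((Real.sinh t : ℂ) ^ 2 + 1) * w_sq α t -
    2 * (α ^ 2 * (Real.sinh t : ℂ) ^ 2 + 1) * hC

theorem hasDerivAt_phi (hre : 0 < α.re) (him : 0 < α.im) (ht : t ≠ 0) :
    HasDerivAt (phi α) (w α t / Real.sinh t) t := by
  have hW0 := ne_zero_of_re_pos (re_w_pos hre him ht)
  have hS0 : (Real.sinh t : ℂ) ≠ 0 := ofReal_ne_zero.2 (Real.sinh_ne_zero.2 ht)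
  refine (((hasDerivAt_log_mul_cosh_add_w_div hre him ht).const_mul α).add
    ((hasDerivAt_log_cosh_sub_w_div_cosh_add_w hre him ht).const_mul (1 / 2))).congr_deriv ?_
  field_simp
  linear_combination -w_sq α t

end

theorem integral_w_div_sinh {α : ℂ} (hre : 0 < α.re) (him : 0 < α.im) {a b : ℝ}
    (h : (0 : ℝ) ∉ Set.uIcc a b) :
    ∫ t in a..b, w α t / Real.sinh t = phi α b - phi α a := by
  have hne : ∀ x ∈ Set.uIcc a b, x ≠ 0 := fun x hx h0 => h (h0 ▸ hx)
  refine intervalIntegral.integral_eq_sub_of_hasDerivAt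
    (fun x hx => hasDerivAt_phi hre him (hne x hx)) (ContinuousOn.intervalIntegrable ?_)
  intro x hx
  have hW := hasDerivAt_w (one_add_sq_mul_sinh_sq_mem_slitPlane hre him (hne x hx))
  have hS0 : (Real.sinh x : ℂ) ≠ 0 := ofReal_ne_zero.2 (Real.sinh_ne_zero.2 (hne x hx))
  exact (hW.continuousAt.div (by fun_prop) hS0).continuousWithinAt

/-- For `Re α > 0`, `Im α > 0` and `0 < r₁ ≤ r₂`,
`φ(α,r₂) − φ(α,r₁) = ∫_{r₁}^{r₂} √(1 + α² sinh² t)/sinh t dt`. -/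
theorem phi_integral_formula (α : ℂ) (hre : 0 < α.re) (him : 0 < α.im)
    (r₁ r₂ : ℝ) (h1 : 0 < r₁) (h12 : r₁ ≤ r₂) :
    phi α r₂ - phi α r₁ =
      ∫ t in r₁..r₂,
        (1 + α ^ 2 * (Real.sinh t : ℂ) ^ 2) ^ (1 / 2 : ℂ) / (Real.sinh t : ℂ) :=
  (integral_w_div_sinh hre him (Set.notMem_uIcc_of_lt h1 (h1.trans_le h12))).symm
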